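/- arXiv:1607.01292 — 3 statements merged into one kernel-verified Lean document; each statement's English description precedes it below -/
import Mathlib

section
/- Symmetry of the joint distribution on a fixed descent number (used in the proof of Proposition 2.8): for all r, m ∈ ℕ and all i, j ∈ ℕ₀, the number of w ∈ S_{r,m} with des(w) = i and maj(w) = j equals the number of w ∈ S_{r,m} with des(w) = i and maj(w) = i·rm − j. -/
open Finset

/-- The letter (`0`-based) at (`0`-based) position `i` of the word `w`;
junk value `0` out of range. -/
def letterAt {N m : ℕ} (w : Fin N → Fin m) (i : ℕ) : ℕ :=
  if h : i < N then (w ⟨i, h⟩ : ℕ) else 0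

/-- Descent set: the `1`-based positions `i ∈ {1,…,N−1}` with `w_i > w_{i+1}`. -/
def desSet {N m : ℕ} (w : Fin N → Fin m) : Finset ℕ :=
  (Finset.Ico 1 N).filter fun i => letterAt w i < letterAt w (i - 1)

/-- Descent number `des`. -/
def des {N m : ℕ} (w : Fin N → Fin m) : ℕ := (desSet w).card

/-- Major index `maj`. -/
def maj {N m : ℕ} (w : Fin N → Fin m) : ℕ := ∑ i ∈ desSet w, i

/-- Multiset permutations: words of length `N` over the alphabet `Fin m` (the letter `i+1`
of `{1,…,m}` being encoded by `i : Fin m`) in which letter `i` occurs exactly `lam i` times. -/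
def multisetPerms (N m : ℕ) (lam : Fin m → ℕ) : Finset (Fin N → Fin m) :=
  Finset.univ.filter fun w => ∀ i, (Finset.univ.filter fun j => w j = i).card = lam i

/-!
Reverse-complementation `w ↦ w'`, `w'ₖ = m + 1 - w_{N+1-k}`, is an involution of `S_{r,m}`
(it sends a letter `c` to `m + 1 - c`, and every letter occurs `r` times). A descent of `w` at
`k` becomes a descent of `w'` at `N - k`, so `des w' = des w` and `maj w' = des w · N - maj w`.
-/

def wordRev {N m : ℕ} (w : Fin N → Fin m) : Fin N → Fin m :=
  fun k => (w k.rev).rev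

lemma wordRev_involutive {N m : ℕ} : Function.Involutive (wordRev : (Fin N → Fin m) → _) := by
  intro w
  funext k
  simp [wordRev]

lemma letterAt_lt {N m : ℕ} (w : Fin N → Fin m) {k : ℕ} (hk : k < N) : letterAt w k < m := by
  simp [letterAt, hk]

lemma letterAt_wordRev {N m : ℕ} (w : Fin N → Fin m) {k : ℕ} (hk : k < N) :
    letterAt (wordRev w) k = m - 1 - letterAt w (N - 1 - k) := by
  have hk' : N - 1 - k < N := by omega
  have hrev : (⟨k, hk⟩ : Fin N).rev = ⟨N - 1 - k, hk'⟩ :=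
    Fin.ext (by simp only [Fin.val_rev]; omega)
  simp only [letterAt, hk, hk', dif_pos, wordRev, Fin.val_rev, hrev]
  omega

lemma mem_desSet_wordRev {N m : ℕ} (w : Fin N → Fin m) {k : ℕ} (hk : k ∈ Ico 1 N) :
    k ∈ desSet (wordRev w) ↔ N - k ∈ desSet w := by
  rw [mem_Ico] at hk
  have hk' : N - k ∈ Ico 1 N := mem_Ico.mpr (by omega)
  simp only [desSet, mem_filter, hk', true_and, mem_Ico.mpr hk,
    letterAt_wordRev w (show k < N by omega), letterAt_wordRev w (show k - 1 < N by omega)]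
  have h₁ := letterAt_lt w (show N - k < N by omega)
  have h₂ := letterAt_lt w (show N - k - 1 < N by omega)
  rw [show N - 1 - k = N - k - 1 by omega, show N - 1 - (k - 1) = N - k by omega]
  omega

lemma desSet_subset_Ico {N m : ℕ} (w : Fin N → Fin m) : desSet w ⊆ Ico 1 N :=
  filter_subset _ _

lemma desSet_wordRev {N m : ℕ} (w : Fin N → Fin m) :
    desSet (wordRev w) = (desSet w).image (N - ·) := by
  ext k
  simp only [mem_image]
  constructor
  · intro hk
    have hk' := mem_Ico.mp (desSet_subset_Ico _ hk)
    exact ⟨N - k, (mem_desSet_wordRev w (desSet_subset_Ico _ hk)).mp hk, by omega⟩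
  · rintro ⟨l, hl, rfl⟩
    have hl' := mem_Ico.mp (desSet_subset_Ico _ hl)
    have hNl : N - l ∈ Ico 1 N := mem_Ico.mpr (by omega)
    rwa [mem_desSet_wordRev w hNl, Nat.sub_sub_self hl'.2.le]

lemma sub_injOn_desSet {N m : ℕ} (w : Fin N → Fin m) : Set.InjOn (N - ·) (desSet w) := by
  intro k hk l hl h
  have := mem_Ico.mp (desSet_subset_Ico _ hk)
  have := mem_Ico.mp (desSet_subset_Ico _ hl)
  simp only at h
  omega

lemma des_wordRev {N m : ℕ} (w : Fin N → Fin m) : des (wordRev w) = des w := by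
  rw [des, desSet_wordRev, card_image_of_injOn (sub_injOn_desSet w), des]

lemma maj_wordRev {N m : ℕ} (w : Fin N → Fin m) :
    (maj (wordRev w) : ℤ) = des w * N - maj w := by
  rw [maj, desSet_wordRev, sum_image (sub_injOn_desSet w), Nat.cast_sum, maj, des,
    Nat.cast_sum, ← nsmul_eq_mul, ← sum_const, ← sum_sub_distrib]
  refine sum_congr rfl fun k hk => ?_
  have := mem_Ico.mp (desSet_subset_Ico _ hk)
  omega

lemma wordRev_mem_multisetPerms {N m : ℕ} {lam : Fin m → ℕ} {w : Fin N → Fin m}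
    (hw : w ∈ multisetPerms N m lam) : wordRev w ∈ multisetPerms N m (lam ∘ Fin.rev) := by
  simp only [multisetPerms, mem_filter, mem_univ, true_and, Function.comp_apply] at hw ⊢
  intro c
  rw [← hw c.rev]
  refine card_equiv Fin.revPerm fun k => ?_
  simp only [mem_filter, mem_univ, true_and, wordRev, Fin.revPerm_apply, Fin.rev_eq_iff]

theorem maj_symmetry_fixed_des_general (r m : ℕ) (i j : ℕ) :
    ((multisetPerms (r * m) m (fun _ => r)).filter
        (fun w => des w = i ∧ maj w = j)).card =
      ((multisetPerms (r * m) m (fun _ => r)).filter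
        (fun w => des w = i ∧ (maj w : ℤ) = (i : ℤ) * (r * m : ℤ) - (j : ℤ))).card := by
  refine card_nbij' wordRev wordRev ?_ ?_ (fun w _ => wordRev_involutive w)
    (fun w _ => wordRev_involutive w)
  · intro w hw
    simp only [mem_coe, mem_filter] at hw ⊢
    obtain ⟨hw, rfl, rfl⟩ := hw
    refine ⟨wordRev_mem_multisetPerms hw, des_wordRev w, ?_⟩
    rw [maj_wordRev]
    push_cast
    ring
  · intro w hw
    simp only [mem_coe, mem_filter] at hw ⊢
    obtain ⟨hw, rfl, hmaj⟩ := hw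
    refine ⟨wordRev_mem_multisetPerms hw, des_wordRev w, ?_⟩
    have h := maj_wordRev w
    push_cast at hmaj h
    omega

/-- **Symmetry of the joint distribution on a fixed descent number** (used in the proof of
Proposition 2.8): `#{w ∈ S_{r,m} : des w = i, maj w = j} = #{w ∈ S_{r,m} : des w = i,
maj w = i·rm − j}`. -/
theorem maj_symmetry_fixed_des (r m : ℕ) (hr : 0 < r) (hm : 0 < m) (i j : ℕ) :
    ((multisetPerms (r * m) m (fun _ => r)).filter
        (fun w => des w = i ∧ maj w = j)).card =
      ((multisetPerms (r * m) m (fun _ => r)).filter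
        (fun w => des w = i ∧ (maj w : ℤ) = (i : ℤ) * (r * m : ℤ) - (j : ℤ))).card :=
  maj_symmetry_fixed_des_general r m i j
end

section
/- Proposition 2.13 (divisibility part): let r be odd. Then the polynomial 1 + x q^r divides C_{r,2}(x,q) in ℤ[x,q], i.e. C_{r,2}(x,q) = (1 + x q^r)·C'_{r,2}(x,q) for some C'_{r,2} ∈ ℤ[x,q]. -/
open Finset

/-!
Removing the last letter of a binary word (a final descent `1 0` at position `n + 1` contributes
`x q^{n+1}`) gives a recursion for `desMajPoly (a + b) ![a, b]` which MacMahon's sum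
`∑ₖ xᵏ q^{k²} [a k]_q [b k]_q` also satisfies, so the two agree. For `a = b = r = 2k + d`, the
symmetry of the Gaussian binomials shows that the terms `k` and `k + d` differ by the factor
`(x q^r)^d`. When `r` is odd every such `d` is odd, so `1 + x q^r` divides each pair.
-/

section Words

variable {n m : ℕ}

lemma letterAt_snoc (u : Fin n → Fin m) (ℓ : Fin m) (i : ℕ) :
    letterAt (Fin.snoc u ℓ : Fin (n + 1) → Fin m) i
      = if i = n then (ℓ : ℕ) else letterAt u i := by
  rcases lt_trichotomy i n with hi | rfl | hi
  · simp [letterAt, hi, hi.ne, Nat.lt_add_one_of_lt hi, Fin.snoc]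
  · simp [letterAt, Fin.snoc]
  · simp [letterAt, hi.ne', show ¬ i < n by omega, show ¬ i < n + 1 by omega]

lemma letterAt_le {N : ℕ} (w : Fin N → Fin (m + 1)) (i : ℕ) : letterAt w i ≤ m := by
  unfold letterAt
  split_ifs
  exacts [Fin.is_le _, m.zero_le]

lemma mem_desSet {N : ℕ} {w : Fin N → Fin m} {i : ℕ} :
    i ∈ desSet w ↔ 1 ≤ i ∧ i < N ∧ letterAt w i < letterAt w (i - 1) := by
  simp [desSet, and_assoc]

-- For `n = 0` the condition reads `ℓ < letterAt u 0`, false since `0` is the out-of-range value.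
lemma mem_desSet_snoc (u : Fin n → Fin m) (ℓ : Fin m) (i : ℕ) :
    i ∈ desSet (Fin.snoc u ℓ : Fin (n + 1) → Fin m)
      ↔ i ∈ desSet u ∨ (i = n ∧ (ℓ : ℕ) < letterAt u (n - 1)) := by
  simp only [mem_desSet, letterAt_snoc]
  rcases lt_trichotomy i n with hi | rfl | hi
  · simp [hi.ne, show i - 1 ≠ n by omega, hi, Nat.lt_add_one_of_lt hi]
  · rcases Nat.eq_zero_or_pos i with rfl | hpos
    · simp [letterAt]
    · simp [show i - 1 ≠ i by omega, Nat.one_le_iff_ne_zero.2 hpos.ne']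
  · simp [hi.ne', show ¬ i < n by omega, show ¬ i < n + 1 by omega]

lemma desSet_snoc (u : Fin n → Fin m) (ℓ : Fin m) :
    desSet (Fin.snoc u ℓ : Fin (n + 1) → Fin m)
      = if (ℓ : ℕ) < letterAt u (n - 1) then insert n (desSet u) else desSet u := by
  ext i
  split_ifs with h <;> simp [mem_desSet_snoc, h, or_comm]

lemma des_maj_snoc {R : Type*} [CommSemiring R] (x q : R) (u : Fin n → Fin m) (ℓ : Fin m) :
    x ^ des (Fin.snoc u ℓ : Fin (n + 1) → Fin m)
        * q ^ maj (Fin.snoc u ℓ : Fin (n + 1) → Fin m)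
      = x ^ des u * q ^ maj u * if (ℓ : ℕ) < letterAt u (n - 1) then x * q ^ n else 1 := by
  have hn : n ∉ desSet u := fun h => (mem_desSet.1 h).2.1.false
  rw [des, maj, desSet_snoc]
  split_ifs
  · rw [card_insert_of_notMem hn, sum_insert hn, des, maj]
    ring
  · rw [des, maj, mul_one]

lemma card_filter_snoc_eq (u : Fin n → Fin m) (ℓ i : Fin m) :
    #{j | (Fin.snoc u ℓ : Fin (n + 1) → Fin m) j = i}
      = #{j | u j = i} + if ℓ = i then 1 else 0 := by
  rw [card_filter, card_filter, Fin.sum_univ_castSucc]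
  simp [Fin.snoc_castSucc, Fin.snoc_last]

lemma snoc_mem_multisetPerms_iff (u : Fin n → Fin m) (ℓ : Fin m) (c : Fin m → ℕ) :
    Fin.snoc u ℓ ∈ multisetPerms (n + 1) m (c + Pi.single ℓ 1)
      ↔ u ∈ multisetPerms n m c := by
  simp only [multisetPerms, mem_filter, mem_univ, true_and, card_filter_snoc_eq, Pi.add_apply,
    Pi.single_apply, eq_comm (a := ℓ)]
  exact forall_congr' fun i => by split_ifs <;> omega

lemma sum_multisetPerms_filter_last {M : Type*} [AddCommMonoid M] (c : Fin m → ℕ) (ℓ : Fin m)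
    (f : (Fin (n + 1) → Fin m) → M) :
    ∑ w ∈ multisetPerms (n + 1) m (c + Pi.single ℓ 1) with w (Fin.last n) = ℓ, f w
      = ∑ u ∈ multisetPerms n m c, f (Fin.snoc u ℓ) := by
  have hsnoc {w : Fin (n + 1) → Fin m} (hw : w (Fin.last n) = ℓ) :
      Fin.snoc (Fin.init w) ℓ = w := by
    rw [← hw, Fin.snoc_init_self]
  refine sum_nbij' Fin.init (Fin.snoc · ℓ) (fun w hw => ?_) (fun u hu => ?_) (fun w hw => ?_)
    (fun u _ => Fin.init_snoc (α := fun _ => Fin m) ℓ u) (fun w hw => ?_)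
  all_goals simp only [mem_filter] at *
  · rw [← snoc_mem_multisetPerms_iff, hsnoc hw.2]
    exact hw.1
  · exact ⟨(snoc_mem_multisetPerms_iff u ℓ c).2 hu,
      Fin.snoc_last (α := fun _ => Fin m) ℓ u⟩
  · exact hsnoc hw.2
  · rw [hsnoc hw.2]

lemma multisetPerms_single (ℓ : Fin m) (n : ℕ) :
    multisetPerms n m (Pi.single ℓ n) = {fun _ => ℓ} := by
  ext w
  simp only [multisetPerms, mem_filter, mem_univ, true_and, mem_singleton, Pi.single_apply]
  constructor
  · intro h
    funext j
    by_contra hj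
    have := h (w j)
    rw [if_neg hj, card_eq_zero, filter_eq_empty_iff] at this
    exact this (mem_univ j) rfl
  · rintro rfl i
    split_ifs with h
    · simp [h]
    · simp [Ne.symm h]

lemma desSet_const (ℓ : Fin m) : desSet (fun _ : Fin n => ℓ) = ∅ := by
  refine eq_empty_of_forall_notMem fun i hi => ?_
  obtain ⟨-, hin, hlt⟩ := mem_desSet.1 hi
  simp [letterAt, hin, show i - 1 < n by omega] at hlt

end Words

section GaussianBinomial

variable {R : Type*} [CommSemiring R] (q : R)

lemma Nat.choose_two_mul_two_add_self (n : ℕ) : n.choose 2 * 2 + n = n * n := by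
  induction n with
  | zero => rfl
  | succ n ih => rw [Nat.choose_succ_succ', Nat.choose_one_right]; linarith

/-- `q ^ (k.choose 2)` times the Gaussian binomial coefficient `[n k]_q`. -/
def subsetSumPoly (n k : ℕ) : R :=
  ∑ S ∈ (range n).powersetCard k, q ^ ∑ i ∈ S, i

@[simp] lemma subsetSumPoly_zero_right (n : ℕ) : subsetSumPoly q n 0 = 1 := by
  simp [subsetSumPoly]

@[simp] lemma subsetSumPoly_zero_succ (k : ℕ) : subsetSumPoly q 0 (k + 1) = 0 := by
  rw [subsetSumPoly, range_zero, powersetCard_eq_empty.2 (by simp), sum_empty]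

lemma subsetSumPoly_eq_zero_of_lt {n k : ℕ} (h : n < k) : subsetSumPoly q n k = 0 := by
  rw [subsetSumPoly, powersetCard_eq_empty.2 (by simpa using h), sum_empty]

lemma subsetSumPoly_succ_succ (n k : ℕ) :
    subsetSumPoly q (n + 1) (k + 1) = subsetSumPoly q n (k + 1) + q ^ n * subsetSumPoly q n k := by
  have hn : n ∉ range n := notMem_range_self
  have hdisj : Disjoint ((range n).powersetCard (k + 1))
      (((range n).powersetCard k).image (insert n)) := by
    rw [disjoint_right]
    simp only [mem_image, mem_powersetCard]
    rintro _ ⟨S, -, rfl⟩ ⟨hsub, -⟩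
    exact hn (hsub (mem_insert_self n S))
  have hinj : Set.InjOn (insert n) ((range n).powersetCard k : Set (Finset ℕ)) :=
    fun S hS T hT h => by
    rw [← erase_insert (fun h' => hn ((mem_powersetCard.1 hS).1 h')),
        ← erase_insert (fun h' => hn ((mem_powersetCard.1 hT).1 h')), h]
  rw [subsetSumPoly, range_add_one, powersetCard_succ_insert hn, sum_union hdisj, sum_image hinj,
    subsetSumPoly, subsetSumPoly, mul_sum]
  congr 1
  refine sum_congr rfl fun S hS => ?_
  rw [sum_insert fun h' => hn ((mem_powersetCard.1 hS).1 h'), pow_add]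

def reflCompl (n : ℕ) (S : Finset ℕ) : Finset ℕ := (range n \ S).image (n - 1 - ·)

lemma mem_reflCompl {n i : ℕ} {S : Finset ℕ} :
    i ∈ reflCompl n S ↔ i < n ∧ n - 1 - i ∉ S := by
  simp only [reflCompl, mem_image, mem_sdiff, mem_range]
  constructor
  · rintro ⟨j, ⟨hj, hjS⟩, rfl⟩
    exact ⟨by omega, by rwa [show n - 1 - (n - 1 - j) = j by omega]⟩
  · rintro ⟨hi, hiS⟩
    exact ⟨n - 1 - i, ⟨by omega, hiS⟩, by omega⟩

lemma reflCompl_reflCompl {n : ℕ} {S : Finset ℕ} (hS : S ⊆ range n) :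
    reflCompl n (reflCompl n S) = S := by
  ext i
  simp only [mem_reflCompl, not_and, not_not]
  constructor
  · rintro ⟨hi, h⟩
    simpa [show n - 1 - (n - 1 - i) = i by omega] using h (by omega)
  · intro hi
    have hin := mem_range.1 (hS hi)
    exact ⟨hin, fun _ => by rwa [show n - 1 - (n - 1 - i) = i by omega]⟩

lemma reflCompl_subset (n : ℕ) (S : Finset ℕ) : reflCompl n S ⊆ range n :=
  fun _ hi => mem_range.2 (mem_reflCompl.1 hi).1

lemma card_reflCompl {n : ℕ} {S : Finset ℕ} (hS : S ⊆ range n) :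
    (reflCompl n S).card = n - S.card := by
  rw [reflCompl, card_image_of_injOn, card_sdiff_of_subset hS, card_range]
  intro i hi j hj h
  simp only [coe_sdiff, coe_range, Set.mem_sdiff, Set.mem_Iio] at hi hj h
  omega

lemma sum_reflCompl {k d : ℕ} {S : Finset ℕ} (hS : S ⊆ range (2 * k + d)) (hk : S.card = k) :
    ∑ i ∈ reflCompl (2 * k + d) S, i = ∑ i ∈ S, i + (k * d + d.choose 2) := by
  obtain ⟨n, hn⟩ : ∃ n, 2 * k + d = n := ⟨_, rfl⟩
  rw [hn] at hS ⊢
  have hinj : Set.InjOn (n - 1 - ·) ((range n \ S : Finset ℕ) : Set ℕ) := by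
    intro i hi j hj h
    simp only [coe_sdiff, coe_range, Set.mem_sdiff, Set.mem_Iio] at hi hj h
    omega
  have hrefl : ∑ i ∈ range n \ S, (n - 1 - i + (i + 1)) = (k + d) * n := by
    rw [sum_congr rfl fun i hi => show n - 1 - i + (i + 1) = n by
      have := mem_range.1 (mem_sdiff.1 hi).1; omega, sum_const, card_sdiff_of_subset hS, card_range,
      hk, smul_eq_mul, show n - k = k + d by omega]
  rw [sum_add_distrib, sum_add_distrib, sum_const, card_sdiff_of_subset hS, card_range, hk,
    smul_eq_mul, mul_one, show n - k = k + d by omega] at hrefl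
  have hsplit := sum_sdiff hS (f := fun i => i)
  have hrange := Nat.choose_two_mul_two_add_self n
  have hd := Nat.choose_two_mul_two_add_self d
  rw [Nat.choose_two_right, ← sum_range_id] at hrange
  rw [reflCompl, sum_image hinj]
  subst hn
  linarith

lemma reflCompl_mem_powersetCard {n k : ℕ} {S : Finset ℕ}
    (hS : S ∈ (range n).powersetCard k) :
    reflCompl n S ∈ (range n).powersetCard (n - k) := by
  rw [mem_powersetCard] at hS ⊢
  exact ⟨reflCompl_subset n S, by rw [card_reflCompl hS.1, hS.2]⟩

/-- The symmetry `[n k]_q = [n (n - k)]_q`, for `n = 2k + d`. -/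
lemma subsetSumPoly_symm (k d : ℕ) :
    subsetSumPoly q (2 * k + d) (k + d)
      = q ^ (k * d + d.choose 2) * subsetSumPoly q (2 * k + d) k := by
  rw [subsetSumPoly, subsetSumPoly, mul_sum, eq_comm]
  refine sum_nbij' (reflCompl _) (reflCompl _) (fun S hS => ?_) (fun S hS => ?_)
    (fun S hS => reflCompl_reflCompl (mem_powersetCard.1 hS).1)
    (fun S hS => reflCompl_reflCompl (mem_powersetCard.1 hS).1) (fun S hS => ?_)
  · simpa [show 2 * k + d - k = k + d by omega] using reflCompl_mem_powersetCard hS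
  · simpa [show 2 * k + d - (k + d) = k by omega] using reflCompl_mem_powersetCard hS
  · rw [mem_powersetCard] at hS
    rw [← pow_add, sum_reflCompl hS.1 hS.2, add_comm]

end GaussianBinomial

section CommRing

variable {R : Type*} [CommRing R] (x q : R)

def desMajPoly (n : ℕ) (c : Fin 2 → ℕ) : R :=
  ∑ w ∈ multisetPerms n 2 c, x ^ des w * q ^ maj w

lemma desMajPoly_single (ℓ : Fin 2) (n : ℕ) : desMajPoly x q n (Pi.single ℓ n) = 1 := by
  simp [desMajPoly, multisetPerms_single, des, maj, desSet_const]

lemma sum_filter_last_eq_one_desMajPoly {n : ℕ} (c : Fin 2 → ℕ) :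
    ∑ w ∈ multisetPerms (n + 1) 2 (c + Pi.single 1 1) with w (Fin.last n) = 1,
        x ^ des w * q ^ maj w
      = desMajPoly x q n c := by
  rw [sum_multisetPerms_filter_last, desMajPoly]
  refine sum_congr rfl fun u _ => ?_
  rw [des_maj_snoc, if_neg (by simpa using letterAt_le u (n - 1)), mul_one]

lemma desMajPoly_succ_succ (n a b : ℕ) :
    desMajPoly x q (n + 2) ![a + 1, b + 1] = desMajPoly x q (n + 1) ![a + 1, b]
      + desMajPoly x q (n + 1) ![a, b + 1] + (x * q ^ (n + 1) - 1) * desMajPoly x q n ![a, b] := by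
  have h0 : ![a + 1, b + 1] = ![a, b + 1] + Pi.single 0 1 := by ext i; fin_cases i <;> rfl
  have h1 : ![a + 1, b + 1] = ![a + 1, b] + Pi.single 1 1 := by ext i; fin_cases i <;> rfl
  have h1' : ![a, b + 1] = ![a, b] + Pi.single 1 1 := by ext i; fin_cases i <;> rfl
  have hlast (w : Fin (n + 2) → Fin 2) :
      ¬ w (Fin.last (n + 1)) = 1 ↔ w (Fin.last (n + 1)) = 0 := by
    generalize w (Fin.last (n + 1)) = ℓ
    fin_cases ℓ <;> decide
  have hpos (u : Fin (n + 1) → Fin 2) : (0 : ℕ) < letterAt u n ↔ u (Fin.last n) = 1 := by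
    rw [show letterAt u n = u (Fin.last n) from dif_pos n.lt_add_one]
    generalize u (Fin.last n) = ℓ
    fin_cases ℓ <;> decide
  -- appending `0` creates the descent `n + 1` exactly when the prefix ends in `1`
  have hend0 : ∑ w ∈ multisetPerms (n + 2) 2 ![a + 1, b + 1] with w (Fin.last (n + 1)) = 0,
      x ^ des w * q ^ maj w
      = desMajPoly x q (n + 1) ![a, b + 1] + (x * q ^ (n + 1) - 1) * desMajPoly x q n ![a, b] := by
    rw [h0, sum_multisetPerms_filter_last, ← sum_filter_last_eq_one_desMajPoly x q (n := n), ← h1',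
      mul_comm, sum_mul, sum_filter, desMajPoly, ← sum_add_distrib]
    refine sum_congr rfl fun u _ => ?_
    rw [des_maj_snoc, Nat.add_sub_cancel, Fin.val_zero]
    simp only [hpos]
    split_ifs <;> ring
  rw [desMajPoly, ← sum_filter_add_sum_filter_not _ (fun w => w (Fin.last (n + 1)) = 1),
    filter_congr fun w _ => hlast w, hend0, h1, sum_filter_last_eq_one_desMajPoly]
  ring

/-- MacMahon's sum `∑ₖ xᵏ q^{k²} [a k]_q [b k]_q`. -/
def macMahonSum (a b : ℕ) : R :=
  ∑ k ∈ range (a + 1), x ^ k * q ^ k * subsetSumPoly q a k * subsetSumPoly q b k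

lemma macMahonSum_eq_sum_range {a N : ℕ} (h : a < N) (b : ℕ) :
    macMahonSum x q a b
      = ∑ k ∈ range N, x ^ k * q ^ k * subsetSumPoly q a k * subsetSumPoly q b k := by
  refine sum_subset (range_subset_range.2 h) fun k _ hk => ?_
  rw [subsetSumPoly_eq_zero_of_lt q (by simpa using hk), mul_zero, zero_mul]

@[simp] lemma macMahonSum_zero_left (b : ℕ) : macMahonSum x q 0 b = 1 := by
  simp [macMahonSum]

@[simp] lemma macMahonSum_zero_right (a : ℕ) : macMahonSum x q a 0 = 1 := by
  simp [macMahonSum, sum_range_succ']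

lemma macMahonSum_succ_succ (a b : ℕ) :
    macMahonSum x q (a + 1) (b + 1) = macMahonSum x q (a + 1) b + macMahonSum x q a (b + 1)
      + (x * q ^ (a + b + 1) - 1) * macMahonSum x q a b := by
  set g : ℕ → ℕ → ℕ → R :=
    fun a b k => x ^ k * q ^ k * subsetSumPoly q a k * subsetSumPoly q b k
  have hstep (k : ℕ) : g (a + 1) (b + 1) (k + 1) - g (a + 1) b (k + 1) - g a (b + 1) (k + 1)
      + g a b (k + 1) = x * q ^ (a + b + 1) * g a b k := by
    simp only [g, subsetSumPoly_succ_succ]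
    ring
  have hsum :
      ∑ k ∈ range (a + 2), (g (a + 1) (b + 1) k - g (a + 1) b k - g a (b + 1) k + g a b k)
      = x * q ^ (a + b + 1) * macMahonSum x q a b := by
    simp only [sum_range_succ' _ (a + 1), hstep, ← mul_sum]
    simp [g, macMahonSum]
  simp only [sum_add_distrib, sum_sub_distrib] at hsum
  rw [macMahonSum_eq_sum_range x q (lt_add_one (a + 1)),
    macMahonSum_eq_sum_range x q (lt_add_one (a + 1)),
    macMahonSum_eq_sum_range x q (show a < a + 2 by omega)]
  rw [macMahonSum_eq_sum_range x q (show a < a + 2 by omega)] at hsum ⊢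
  linear_combination hsum

lemma desMajPoly_eq_macMahonSum (a b : ℕ) :
    desMajPoly x q (a + b) ![a, b] = macMahonSum x q a b := by
  induction a generalizing b with
  | zero =>
    rw [zero_add, show ![0, b] = Pi.single 1 b by ext i; fin_cases i <;> rfl, desMajPoly_single,
      macMahonSum_zero_left]
  | succ a iha =>
    induction b with
    | zero =>
      rw [add_zero, show ![a + 1, 0] = Pi.single 0 (a + 1) by ext i; fin_cases i <;> rfl,
        desMajPoly_single, macMahonSum_zero_right]
    | succ b ihb =>
      have hb1 := iha (b + 1)
      rw [← add_assoc] at hb1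
      rw [Nat.add_right_comm] at ihb
      rw [show a + 1 + (b + 1) = a + b + 2 by ring, desMajPoly_succ_succ, ihb, hb1, iha,
        macMahonSum_succ_succ]

lemma macMahonTerm_add (k d : ℕ) :
    x ^ (k + d) * q ^ (k + d) * subsetSumPoly q (2 * k + d) (k + d)
        * subsetSumPoly q (2 * k + d) (k + d)
      = x ^ k * q ^ k * subsetSumPoly q (2 * k + d) k * subsetSumPoly q (2 * k + d) k
        * (x * q ^ (2 * k + d)) ^ d := by
  have hd := Nat.choose_two_mul_two_add_self d
  have hexp : q ^ (k + d) * (q ^ (k * d + d.choose 2)) ^ 2 = q ^ k * q ^ ((2 * k + d) * d) := by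
    rw [← pow_mul, ← pow_add, ← pow_add]
    congr 1
    linarith
  rw [subsetSumPoly_symm, mul_pow, pow_add x]
  linear_combination (x ^ k * x ^ d * subsetSumPoly q (2 * k + d) k ^ 2) * hexp

lemma one_add_mul_pow_dvd_macMahonSum {r : ℕ} (hr : Odd r) :
    1 + x * q ^ r ∣ macMahonSum x q r r := by
  obtain ⟨m, rfl⟩ := hr
  rw [macMahonSum, show 2 * m + 1 + 1 = (m + 1) + (m + 1) by ring, sum_range_add,
    ← sum_range_reflect _ (m + 1), ← sum_add_distrib]
  -- the terms `m - k` and `m + 1 + k` are paired; their indices differ by the odd number `2k + 1`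
  refine dvd_sum fun k hk => ?_
  have hk := mem_range.1 hk
  rw [show m + 1 + k = (m - k) + (2 * k + 1) by omega,
    show 2 * m + 1 = 2 * (m - k) + (2 * k + 1) by omega,
    Nat.add_sub_cancel, macMahonTerm_add]
  have hodd := (odd_two_mul_add_one k).add_dvd_pow_add_pow 1 (x * q ^ (2 * (m - k) + (2 * k + 1)))
  rw [one_pow] at hodd
  rw [← mul_one_add]
  exact hodd.mul_left _

end CommRing

/-- **Proposition 2.13 (divisibility part)**: for odd `r`, `1 + x q^r` divides
`C_{r,2}(x,q)` in `ℤ[x,q]` (with `x = X 0`, `q = X 1` in `MvPolynomial (Fin 2) ℤ`). -/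
theorem one_add_xqr_divides_C_r2 (r : ℕ) (hr : Odd r) :
    ∃ C' : MvPolynomial (Fin 2) ℤ,
      ∑ w ∈ multisetPerms (2 * r) 2 (fun _ => r),
          (MvPolynomial.X 0 : MvPolynomial (Fin 2) ℤ) ^ des w * (MvPolynomial.X 1) ^ maj w =
        (1 + (MvPolynomial.X 0 : MvPolynomial (Fin 2) ℤ) * (MvPolynomial.X 1) ^ r) * C' := by
  obtain ⟨C', hC'⟩ := one_add_mul_pow_dvd_macMahonSum
    (MvPolynomial.X 0 : MvPolynomial (Fin 2) ℤ) (MvPolynomial.X 1) hr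
  refine ⟨C', ?_⟩
  have hcontent : (fun _ : Fin 2 => r) = ![r, r] := by ext i; fin_cases i <;> rfl
  rw [← hC', ← desMajPoly_eq_macMahonSum, ← two_mul, ← hcontent]
  rfl
end

section
/- Theorem 4.1(1), abscissa of convergence: the Dirichlet series Σ_{n≥1} O_λ(n) n^{−s} has abscissa of convergence exactly N; that is, it converges for every complex s with Re(s) > N and diverges for every s with Re(s) < N. -/
/-!
Splitting off one coordinate, a subgroup `H ≤ ℤ × G` of index `n` is determined by
`K = H ∩ G`, whose index `e` divides `n`, together with the coset of `K` lying over the generator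
`n / e` of the projection of `H` to `ℤ`. Hence `a_n(ℤ^{r+1}) ≤ Σ_{e ∣ n} e·a_e(ℤ^r)`, and by
induction `F_λ(n) ≤ n^N (1 + log n)^N`, so `O_λ(n) = O(n^{N-1+ε})` and the series converges for
`Re s > N`. Conversely the kernels of `(t, x) ↦ t + φ x` for `φ : ℤ^r → ℤ/p` are `p^r` distinct
subgroups of index `p` of `ℤ^{r+1}`, so `F_λ(p) ≥ p^N` and `O_λ(p) = (F_λ(p) - 1)/p ≥ p^{N-1}/2`;
as `Σ_p 1/p` diverges, the series diverges for `Re s ≤ N`.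
-/

open Finset

/-- `a_n(ℤ^r)`: the number of subgroups of index `n` in `ℤ^r`. -/
noncomputable def subCount (r n : ℕ) : ℕ :=
  Nat.card {H : AddSubgroup (Fin r → ℤ) // H.index = n}

/-- `F_λ(n) = Π_{i=1}^m Σ_{d∣n} d·a_d(ℤ^{λᵢ})`: the number of points of period `n` of `T_λ`. -/
noncomputable def Fcount {m : ℕ} (lam : Fin m → ℕ) (n : ℕ) : ℕ :=
  ∏ i, ∑ d ∈ n.divisors, d * subCount (lam i) d

/-- `O_λ(n) = (1/n) Σ_{d∣n} μ(n/d) F_λ(d)`: the number of closed orbits of length `n` of `T_λ`. -/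
noncomputable def Ocount {m : ℕ} (lam : Fin m → ℕ) (n : ℕ) : ℚ :=
  (∑ d ∈ n.divisors, (ArithmeticFunction.moebius (n / d) : ℚ) * (Fcount lam d : ℚ)) / n

theorem Int.addSubgroup_eq_zmultiples_index (S : AddSubgroup ℤ) :
    S = AddSubgroup.zmultiples (S.index : ℤ) := by
  obtain ⟨a, rfl⟩ := Int.subgroup_cyclic S
  rw [← AddSubgroup.zmultiples_eq_closure, Int.index_zmultiples, Int.zmultiples_natAbs]

section SubgroupsOfIntProd

variable {G : Type*} [AddCommGroup G]

theorem AddSubgroup.index_eq_index_map_fst_mul_index_comap_inr {A : Type*} [AddCommGroup A]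
    (H : AddSubgroup (A × G)) :
    H.index = (H.map (AddMonoidHom.fst A G)).index * (H.comap (AddMonoidHom.inr A G)).index := by
  have hker : (AddMonoidHom.inr A G).range = (AddMonoidHom.fst A G).ker := by
    ext ⟨a, g⟩
    simp [eq_comm, AddSubgroup.mem_prod]
  rw [index_comap, hker, index_map, (AddMonoidHom.fst A G).range_eq_top_of_surjective
    Prod.fst_surjective, index_top, mul_one, ← relIndex_sup_left, mul_comm,
    relIndex_mul_index le_sup_left]

def preimageZMultiples (K : AddSubgroup G) (d : ℤ) (v : G ⧸ K) : AddSubgroup (ℤ × G) :=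
  (AddSubgroup.zmultiples (d, v)).comap ((AddMonoidHom.id ℤ).prodMap (QuotientAddGroup.mk' K))

theorem eq_preimageZMultiples (H : AddSubgroup (ℤ × G)) {v : G}
    (hv : (((H.map (AddMonoidHom.fst ℤ G)).index : ℤ), v) ∈ H) :
    H = preimageZMultiples (H.comap (AddMonoidHom.inr ℤ G))
      (H.map (AddMonoidHom.fst ℤ G)).index v := by
  set d : ℤ := ((H.map (AddMonoidHom.fst ℤ G)).index : ℤ)
  have key (m : ℤ) (x : ℤ × G) (hx : x.1 = m • d) :
      x ∈ H ↔ x.2 - m • v ∈ H.comap (AddMonoidHom.inr ℤ G) := by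
    have hsplit : x = m • (d, v) + AddMonoidHom.inr ℤ G (x.2 - m • v) := by
      ext <;> simp [hx]
    nth_rewrite 1 [hsplit]
    rw [H.add_mem_cancel_left (H.zsmul_mem hv m), AddSubgroup.mem_comap]
  ext x
  simp only [preimageZMultiples, AddSubgroup.mem_comap, AddSubgroup.mem_zmultiples_iff,
    AddMonoidHom.coe_prodMap, Prod.map_fst, Prod.map_snd, AddMonoidHom.id_apply,
    QuotientAddGroup.mk'_apply, Prod.ext_iff, Prod.smul_fst, Prod.smul_snd]
  constructor
  · intro hx
    obtain ⟨m, hm⟩ := AddSubgroup.mem_zmultiples_iff.mp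
      ((Int.addSubgroup_eq_zmultiples_index _).le (AddSubgroup.mem_map_of_mem _ hx))
    refine ⟨m, hm, ?_⟩
    rwa [← QuotientAddGroup.mk_zsmul, QuotientAddGroup.eq, neg_add_eq_sub, ← key m x hm.symm]
  · rintro ⟨m, hm, hmk⟩
    rwa [← QuotientAddGroup.mk_zsmul, QuotientAddGroup.eq, neg_add_eq_sub, ← key m x hm.symm] at hmk

variable (G) in
abbrev CosetData (n : ℕ) : Type _ :=
  Σ e : n.divisors, Σ K : {K : AddSubgroup G // K.index = e}, G ⧸ K.1

theorem exists_injective_cosetData {n : ℕ} (hn : n ≠ 0) :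
    ∃ f : {H : AddSubgroup (ℤ × G) // H.index = n} → CosetData G n, Function.Injective f := by
  have hv (H : AddSubgroup (ℤ × G)) :
      ∃ v : G, (((H.map (AddMonoidHom.fst ℤ G)).index : ℤ), v) ∈ H := by
    obtain ⟨x, hx, hx1⟩ := AddSubgroup.mem_map.mp
      ((Int.addSubgroup_eq_zmultiples_index (H.map (AddMonoidHom.fst ℤ G))).ge
        (AddSubgroup.mem_zmultiples _))
    exact ⟨x.2, by rwa [← hx1]⟩
  choose v hv using hv
  have hdvd (H : AddSubgroup (ℤ × G)) (hH : H.index = n) :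
      (H.comap (AddMonoidHom.inr ℤ G)).index ∈ n.divisors := by
    rw [Nat.mem_divisors, ← hH, H.index_eq_index_map_fst_mul_index_comap_inr]
    exact ⟨dvd_mul_left _ _, by rw [← H.index_eq_index_map_fst_mul_index_comap_inr, hH]; exact hn⟩
  have hunpack (H : AddSubgroup (ℤ × G)) (hH : H.index = n) :
      H = preimageZMultiples (H.comap (AddMonoidHom.inr ℤ G))
        (n / (H.comap (AddMonoidHom.inr ℤ G)).index : ℕ) (v H) := by
    rw [H.index_eq_index_map_fst_mul_index_comap_inr] at hH
    rw [← hH, Nat.mul_div_cancel _ (Nat.pos_of_ne_zero (right_ne_zero_of_mul (hH ▸ hn)))]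
    exact eq_preimageZMultiples H (hv H)
  let unpack (x : CosetData G n) : AddSubgroup (ℤ × G) :=
    preimageZMultiples x.2.1.1 (n / x.1.1 : ℕ) x.2.2
  refine ⟨fun H => ⟨⟨_, hdvd H.1 H.2⟩, ⟨_, rfl⟩, v H.1⟩, fun H H' h => Subtype.ext ?_⟩
  have := congrArg unpack h
  rw [hunpack H.1 H.2, hunpack H'.1 H'.2]
  exact this

theorem CosetData.finite_and_card_eq {n : ℕ}
    (hfin : ∀ e ∈ n.divisors, Finite {K : AddSubgroup G // K.index = e}) :
    Finite (CosetData G n) ∧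
      Nat.card (CosetData G n) =
        ∑ e ∈ n.divisors, e * Nat.card {K : AddSubgroup G // K.index = e} := by
  have _ (e : n.divisors) : Finite {K : AddSubgroup G // K.index = e} := hfin e e.2
  have hquot (e : n.divisors) (K : {K : AddSubgroup G // K.index = e}) :
      Nat.card (G ⧸ K.1) = e := by rw [← AddSubgroup.index_eq_card, K.2]
  have _ (e : n.divisors) (K : {K : AddSubgroup G // K.index = e}) : Finite (G ⧸ K.1) :=
    Nat.finite_of_card_ne_zero ((hquot e K).trans_ne (Nat.pos_of_mem_divisors e.2).ne')
  refine ⟨inferInstance, ?_⟩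
  rw [Nat.card_sigma, ← Finset.sum_coe_sort n.divisors]
  refine Finset.sum_congr rfl fun e _ => ?_
  have := Fintype.ofFinite {K : AddSubgroup G // K.index = e}
  rw [Nat.card_sigma, Finset.sum_congr rfl fun K _ => hquot e K, Finset.sum_const,
    Finset.card_univ, smul_eq_mul, mul_comm, Nat.card_eq_fintype_card]

theorem finite_subgroups_int_prod_index_and_card_le {n : ℕ} (hn : n ≠ 0)
    (hfin : ∀ e ∈ n.divisors, Finite {K : AddSubgroup G // K.index = e}) :
    Finite {H : AddSubgroup (ℤ × G) // H.index = n} ∧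
      Nat.card {H : AddSubgroup (ℤ × G) // H.index = n} ≤
        ∑ e ∈ n.divisors, e * Nat.card {K : AddSubgroup G // K.index = e} := by
  obtain ⟨f, hf⟩ := exists_injective_cosetData (G := G) hn
  obtain ⟨_, hcard⟩ := CosetData.finite_and_card_eq hfin
  exact ⟨Finite.of_injective f hf, hcard ▸ Nat.card_le_card_of_injective f hf⟩

theorem card_addMonoidHom_zmod_le_card_subgroups_int_prod_index (n : ℕ)
    [Finite {H : AddSubgroup (ℤ × G) // H.index = n}] :
    Nat.card (G →+ ZMod n) ≤ Nat.card {H : AddSubgroup (ℤ × G) // H.index = n} := by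
  have hindex (φ : G →+ ZMod n) : ((Int.castAddHom (ZMod n)).coprod φ).ker.index = n := by
    have hsurj : Function.Surjective ((Int.castAddHom (ZMod n)).coprod φ) := fun z => by
      obtain ⟨t, rfl⟩ := ZMod.intCast_surjective z
      exact ⟨(t, 0), by simp⟩
    rw [AddSubgroup.index_ker, AddMonoidHom.range_eq_top_of_surjective _ hsurj,
      Nat.card_congr AddSubgroup.topEquiv.toEquiv, Nat.card_zmod]
  refine Nat.card_le_card_of_injective (fun φ => ⟨_, hindex φ⟩) fun φ ψ h => ?_
  ext g
  obtain ⟨t, ht⟩ := ZMod.intCast_surjective (-φ g)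
  have hφ : (t, g) ∈ ((Int.castAddHom (ZMod n)).coprod φ).ker := by simp [ht]
  have hker : ((Int.castAddHom (ZMod n)).coprod φ).ker =
      ((Int.castAddHom (ZMod n)).coprod ψ).ker := congrArg Subtype.val h
  have hψ := hker ▸ hφ
  simp only [AddMonoidHom.mem_ker, AddMonoidHom.coprod_apply, Int.coe_castAddHom, ht] at hψ
  exact neg_add_eq_zero.mp hψ

end SubgroupsOfIntProd

def AddEquiv.subgroupsOfIndexCongr {G G' : Type*} [AddGroup G] [AddGroup G'] (e : G ≃+ G')
    (n : ℕ) : {H : AddSubgroup G // H.index = n} ≃ {H : AddSubgroup G' // H.index = n} :=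
  e.mapAddSubgroup.toEquiv.subtypeEquiv fun H => by simp

def subgroupsOfIndexSuccEquiv (r n : ℕ) :
    {H : AddSubgroup (ℤ × (Fin r → ℤ)) // H.index = n} ≃
      {H : AddSubgroup (Fin (r + 1) → ℤ) // H.index = n} :=
  (Fin.consLinearEquiv ℤ fun _ : Fin (r + 1) => ℤ).toAddEquiv.subgroupsOfIndexCongr n

theorem finite_subgroups_pi_int_index (r : ℕ) {n : ℕ} (hn : n ≠ 0) :
    Finite {H : AddSubgroup (Fin r → ℤ) // H.index = n} := by
  induction r generalizing n with
  | zero => infer_instance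
  | succ r ih =>
    have := (finite_subgroups_int_prod_index_and_card_le hn fun e he =>
      ih (Nat.pos_of_mem_divisors he).ne').1
    exact Finite.of_equiv _ (subgroupsOfIndexSuccEquiv r n)

/-- The number of points of period `n` of `T_r`. -/
noncomputable def pointCount (r n : ℕ) : ℕ :=
  ∑ d ∈ n.divisors, d * subCount r d

theorem subCount_one_right (r : ℕ) : subCount r 1 = 1 := by
  refine Nat.card_eq_one_iff_unique.mpr ⟨⟨fun H H' => Subtype.ext ?_⟩, ⟨⟨⊤, AddSubgroup.index_top⟩⟩⟩
  rw [AddSubgroup.index_eq_one.mp H.2, AddSubgroup.index_eq_one.mp H'.2]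

theorem subCount_zero_left {n : ℕ} (hn : n ≠ 1) : subCount 0 n = 0 := by
  refine Nat.card_eq_zero.mpr (.inl ⟨fun H => hn ?_⟩)
  rw [← H.2, Subsingleton.elim H.1 ⊤, AddSubgroup.index_top]

theorem subCount_succ_le (r : ℕ) {n : ℕ} (hn : n ≠ 0) : subCount (r + 1) n ≤ pointCount r n := by
  rw [subCount, ← Nat.card_congr (subgroupsOfIndexSuccEquiv r n)]
  exact (finite_subgroups_int_prod_index_and_card_le hn fun e he =>
    finite_subgroups_pi_int_index r (Nat.pos_of_mem_divisors he).ne').2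

theorem pow_le_subCount_succ (r : ℕ) {n : ℕ} (hn : n ≠ 0) : n ^ r ≤ subCount (r + 1) n := by
  have := finite_subgroups_pi_int_index (r + 1) hn
  have := Finite.of_equiv _ (subgroupsOfIndexSuccEquiv r n).symm
  calc n ^ r = Nat.card ((Fin r → ℤ) →+ ZMod n) := by
        rw [Nat.card_congr ((addMonoidHomLequivInt ℤ).trans
          (LinearEquiv.piRing ℤ (ZMod n) (Fin r) ℤ)).toEquiv, Nat.card_fun, Nat.card_zmod,
          Nat.card_fin]
    _ ≤ subCount (r + 1) n := by
        rw [subCount, ← Nat.card_congr (subgroupsOfIndexSuccEquiv r n)]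
        exact card_addMonoidHom_zmod_le_card_subgroups_int_prod_index n

theorem pointCount_zero_left {n : ℕ} (hn : n ≠ 0) : pointCount 0 n = 1 := by
  rw [pointCount, Finset.sum_eq_single 1 (fun d _ hd => by rw [subCount_zero_left hd, mul_zero])
    (fun h => absurd (Nat.one_mem_divisors.2 hn) h), subCount_one_right, one_mul]

theorem pointCount_one_right (r : ℕ) : pointCount r 1 = 1 := by
  simp [pointCount, subCount_one_right]

theorem pow_le_pointCount (r : ℕ) {n : ℕ} (hn : n ≠ 0) : n ^ r ≤ pointCount r n := by
  cases r with
  | zero => rw [pointCount_zero_left hn, pow_zero]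
  | succ r =>
    calc n ^ (r + 1) = n * n ^ r := pow_succ' n r
      _ ≤ n * subCount (r + 1) n := Nat.mul_le_mul_left n (pow_le_subCount_succ r hn)
      _ ≤ pointCount (r + 1) n :=
        Finset.single_le_sum (f := fun d => d * subCount (r + 1) d) (fun _ _ => Nat.zero_le _)
          (Nat.mem_divisors_self n hn)

theorem sum_divisors_inv_le_one_add_log (n : ℕ) :
    ∑ d ∈ n.divisors, (d : ℝ)⁻¹ ≤ 1 + Real.log n := by
  calc ∑ d ∈ n.divisors, (d : ℝ)⁻¹ ≤ ∑ d ∈ Finset.Icc 1 n, (d : ℝ)⁻¹ := by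
        refine Finset.sum_le_sum_of_subset_of_nonneg (fun d hd => ?_) fun _ _ _ => by positivity
        exact Finset.mem_Icc.2 ⟨Nat.pos_of_mem_divisors hd, Nat.divisor_le hd⟩
    _ = harmonic n := by simp [harmonic_eq_sum_Icc]
    _ ≤ 1 + Real.log n := harmonic_le_one_add_log n

theorem sum_divisors_pow_le (n : ℕ) {k : ℕ} (hk : k ≠ 0) :
    ∑ d ∈ n.divisors, (d : ℝ) ^ k ≤ (n : ℝ) ^ k * (1 + Real.log n) := by
  calc ∑ d ∈ n.divisors, (d : ℝ) ^ k = ∑ d ∈ n.divisors, ((n / d : ℕ) : ℝ) ^ k :=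
        (Nat.sum_div_divisors n fun d => (d : ℝ) ^ k).symm
    _ ≤ ∑ d ∈ n.divisors, (n : ℝ) ^ k * (d : ℝ)⁻¹ := by
        refine Finset.sum_le_sum fun d hd => ?_
        have hd1 : (1 : ℝ) ≤ d := by exact_mod_cast Nat.pos_of_mem_divisors hd
        rw [Nat.cast_div (Nat.dvd_of_mem_divisors hd) (by positivity), div_pow, div_eq_mul_inv]
        gcongr
        exact le_self_pow₀ hd1 hk
    _ = (n : ℝ) ^ k * ∑ d ∈ n.divisors, (d : ℝ)⁻¹ := (Finset.mul_sum _ _ _).symm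
    _ ≤ (n : ℝ) ^ k * (1 + Real.log n) := by
        gcongr
        exact sum_divisors_inv_le_one_add_log n

theorem pointCount_le (r : ℕ) {n : ℕ} (hn : n ≠ 0) :
    (pointCount r n : ℝ) ≤ (n : ℝ) ^ r * (1 + Real.log n) ^ r := by
  induction r generalizing n with
  | zero => simp [pointCount_zero_left hn]
  | succ r ih =>
    calc (pointCount (r + 1) n : ℝ) = ∑ d ∈ n.divisors, (d : ℝ) * subCount (r + 1) d := by
          simp [pointCount]
      _ ≤ ∑ d ∈ n.divisors, (d : ℝ) ^ (r + 1) * (1 + Real.log n) ^ r := by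
          refine Finset.sum_le_sum fun d hd => ?_
          have hd0 := (Nat.pos_of_mem_divisors hd).ne'
          have hlogd : Real.log d ≤ Real.log n :=
            Real.log_le_log (by positivity) (by exact_mod_cast Nat.divisor_le hd)
          calc (d : ℝ) * subCount (r + 1) d ≤ d * pointCount r d := by
                gcongr
                exact_mod_cast subCount_succ_le r hd0
            _ ≤ d * ((d : ℝ) ^ r * (1 + Real.log d) ^ r) := by gcongr; exact ih hd0
            _ ≤ d * ((d : ℝ) ^ r * (1 + Real.log n) ^ r) := by gcongr
            _ = (d : ℝ) ^ (r + 1) * (1 + Real.log n) ^ r := by ring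
      _ = (∑ d ∈ n.divisors, (d : ℝ) ^ (r + 1)) * (1 + Real.log n) ^ r := by rw [Finset.sum_mul]
      _ ≤ (n : ℝ) ^ (r + 1) * (1 + Real.log n) * (1 + Real.log n) ^ r := by
          gcongr
          exact sum_divisors_pow_le n r.succ_ne_zero
      _ = (n : ℝ) ^ (r + 1) * (1 + Real.log n) ^ (r + 1) := by ring

theorem exists_one_add_log_pow_le_mul_rpow (k : ℕ) {ε : ℝ} (hε : 0 < ε) :
    ∃ C, ∀ n : ℕ, n ≠ 0 → (1 + Real.log n) ^ k ≤ C * (n : ℝ) ^ ε := by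
  set δ := ε / (k + 1)
  have hδ : 0 < δ := by positivity
  refine ⟨(1 + δ⁻¹) ^ k, fun n hn => ?_⟩
  have hn1 : (1 : ℝ) ≤ n := by exact_mod_cast Nat.one_le_iff_ne_zero.mpr hn
  have hlog : 1 + Real.log n ≤ (1 + δ⁻¹) * (n : ℝ) ^ δ := by
    have h1 := Real.log_le_rpow_div (Nat.cast_nonneg n) hδ
    have h2 := Real.one_le_rpow hn1 hδ.le
    rw [div_eq_mul_inv] at h1
    nlinarith
  calc (1 + Real.log n) ^ k ≤ ((1 + δ⁻¹) * (n : ℝ) ^ δ) ^ k := by gcongr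
    _ = (1 + δ⁻¹) ^ k * (n : ℝ) ^ (δ * k) := by
        rw [mul_pow, Real.rpow_mul_natCast (Nat.cast_nonneg n)]
    _ ≤ (1 + δ⁻¹) ^ k * (n : ℝ) ^ ε := by
        gcongr
        rw [div_mul_eq_mul_div, div_le_iff₀ (by positivity)]
        nlinarith

section OrbitCount

variable {m : ℕ} (lam : Fin m → ℕ)

theorem Fcount_eq_prod_pointCount (n : ℕ) : Fcount lam n = ∏ i, pointCount (lam i) n :=
  rfl

theorem Fcount_one : Fcount lam 1 = 1 := by
  simp [Fcount_eq_prod_pointCount, pointCount_one_right]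

theorem Fcount_le {n : ℕ} (hn : n ≠ 0) :
    (Fcount lam n : ℝ) ≤ (n : ℝ) ^ (∑ i, lam i) * (1 + Real.log n) ^ (∑ i, lam i) := by
  rw [Fcount_eq_prod_pointCount, ← Finset.prod_pow_eq_pow_sum, ← Finset.prod_pow_eq_pow_sum,
    ← Finset.prod_mul_distrib]
  push_cast
  exact Finset.prod_le_prod (fun _ _ => by positivity) fun i _ => pointCount_le (lam i) hn

theorem pow_le_Fcount {n : ℕ} (hn : n ≠ 0) :
    n ^ (∑ i, lam i) ≤ Fcount lam n := by
  rw [Fcount_eq_prod_pointCount, ← Finset.prod_pow_eq_pow_sum]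
  exact Finset.prod_le_prod' fun i _ => pow_le_pointCount (lam i) hn

theorem Ocount_zero : Ocount lam 0 = 0 := by
  simp [Ocount]

theorem Ocount_prime {p : ℕ} (hp : p.Prime) : Ocount lam p = ((Fcount lam p : ℚ) - 1) / p := by
  rw [Ocount, hp.divisors, Finset.sum_pair hp.one_lt.ne, Nat.div_one, Nat.div_self hp.pos,
    ArithmeticFunction.moebius_apply_one, ArithmeticFunction.moebius_apply_prime hp, Fcount_one]
  push_cast
  ring

theorem abs_Ocount_mul_le (hN : 0 < ∑ i, lam i) {n : ℕ} (hn : n ≠ 0) :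
    |(Ocount lam n : ℝ)| * n ≤ (n : ℝ) ^ (∑ i, lam i) * (1 + Real.log n) ^ (∑ i, lam i + 1) := by
  set N := ∑ i, lam i
  have hn0 : (0 : ℝ) < n := by positivity
  calc |(Ocount lam n : ℝ)| * n
      = |∑ d ∈ n.divisors, (ArithmeticFunction.moebius (n / d) : ℝ) * (Fcount lam d : ℝ)| := by
        rw [Ocount]
        push_cast
        rw [abs_div, Nat.abs_cast, div_mul_cancel₀ _ hn0.ne']
    _ ≤ ∑ d ∈ n.divisors, (Fcount lam d : ℝ) := by
        refine (Finset.abs_sum_le_sum_abs _ _).trans (Finset.sum_le_sum fun d _ => ?_)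
        rw [abs_mul, Nat.abs_cast]
        refine mul_le_of_le_one_left (by positivity) ?_
        exact_mod_cast ArithmeticFunction.abs_moebius_le_one
    _ ≤ ∑ d ∈ n.divisors, (d : ℝ) ^ N * (1 + Real.log n) ^ N := by
        refine Finset.sum_le_sum fun d hd =>
          (Fcount_le lam (Nat.pos_of_mem_divisors hd).ne').trans ?_
        have hlogd : Real.log d ≤ Real.log n :=
          Real.log_le_log (by exact_mod_cast Nat.pos_of_mem_divisors hd)
            (by exact_mod_cast Nat.divisor_le hd)
        gcongr
    _ = (∑ d ∈ n.divisors, (d : ℝ) ^ N) * (1 + Real.log n) ^ N := (Finset.sum_mul _ _ _).symm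
    _ ≤ (n : ℝ) ^ N * (1 + Real.log n) * (1 + Real.log n) ^ N := by
        gcongr
        exact sum_divisors_pow_le n hN.ne'
    _ = (n : ℝ) ^ N * (1 + Real.log n) ^ (N + 1) := by ring

theorem pow_le_two_mul_Ocount_prime (hN : 0 < ∑ i, lam i) {p : ℕ} (hp : p.Prime) :
    (p : ℝ) ^ (∑ i, lam i) ≤ 2 * p * Ocount lam p := by
  have hp0 : (0 : ℝ) < p := by exact_mod_cast hp.pos
  have hF : (p : ℝ) ^ (∑ i, lam i) ≤ Fcount lam p := by exact_mod_cast pow_le_Fcount lam hp.ne_zero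
  have h2 : (2 : ℝ) ≤ (p : ℝ) ^ (∑ i, lam i) := by
    calc (2 : ℝ) ≤ p := by exact_mod_cast hp.two_le
      _ ≤ (p : ℝ) ^ (∑ i, lam i) := le_self_pow₀ (by exact_mod_cast hp.one_le) hN.ne'
  rw [Ocount_prime lam hp]
  push_cast
  rw [mul_assoc, mul_div_cancel₀ _ hp0.ne']
  linarith

theorem LSeriesSummable_Ocount (hN : 0 < ∑ i, lam i) {s : ℂ}
    (hs : ((∑ i, lam i : ℕ) : ℝ) < s.re) : LSeriesSummable (fun n => (Ocount lam n : ℂ)) s := by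
  set N := ∑ i, lam i
  set x := (N + s.re) / 2 with hx
  obtain ⟨C, hC⟩ := exists_one_add_log_pow_le_mul_rpow (N + 1) (ε := x - N) (by linarith)
  refine LSeriesSummable_of_le_const_mul_rpow (x := x) (by linarith) ⟨C, fun n hn => ?_⟩
  have hn0 : (0 : ℝ) < n := by positivity
  rw [Complex.norm_ratCast]
  calc |(Ocount lam n : ℝ)| = |(Ocount lam n : ℝ)| * n / n :=
        (mul_div_cancel_right₀ _ hn0.ne').symm
    _ ≤ (n : ℝ) ^ N * (1 + Real.log n) ^ (N + 1) / n :=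
        div_le_div_of_nonneg_right (abs_Ocount_mul_le lam hN hn) hn0.le
    _ ≤ (n : ℝ) ^ N * (C * (n : ℝ) ^ (x - N)) / n := by
        gcongr
        exact hC n hn
    _ = C * (n : ℝ) ^ (x - 1) := by
        rw [Real.rpow_sub_one hn0.ne', Real.rpow_sub hn0, Real.rpow_natCast]
        field_simp

theorem not_LSeriesSummable_Ocount (hN : 0 < ∑ i, lam i) {s : ℂ}
    (hs : s.re ≤ ((∑ i, lam i : ℕ) : ℝ)) : ¬ LSeriesSummable (fun n => (Ocount lam n : ℂ)) s := by
  set N := ∑ i, lam i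
  intro hsum
  have hprimes : Summable fun p : Nat.Primes => ‖LSeries.term (fun n => (Ocount lam n : ℂ)) s p‖ :=
    (summable_norm_iff.mpr hsum).comp_injective Nat.Primes.coe_nat_injective
  have hle (p : Nat.Primes) :
      (p : ℝ) ^ (-1 : ℝ) ≤ 2 * ‖LSeries.term (fun n => (Ocount lam n : ℂ)) s p‖ := by
    have hp1 : (1 : ℝ) ≤ p := by exact_mod_cast p.2.one_le
    rw [LSeries.term_of_ne_zero p.2.ne_zero, norm_div, Complex.norm_ratCast,
      Complex.norm_natCast_cpow_of_pos p.2.pos, Real.rpow_neg_one]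
    calc (p : ℝ)⁻¹ = (p : ℝ) ^ N / (p * (p : ℝ) ^ N) := by field_simp
      _ ≤ 2 * p * Ocount lam p / (p * (p : ℝ) ^ N) := by
          gcongr
          exact pow_le_two_mul_Ocount_prime lam hN p.2
      _ = 2 * (Ocount lam p / (p : ℝ) ^ (N : ℝ)) := by
          rw [Real.rpow_natCast]
          field_simp
      _ ≤ 2 * (|(Ocount lam p : ℝ)| / (p : ℝ) ^ s.re) := by
          gcongr
          exact le_abs_self _
  have := Nat.Primes.summable_rpow.mp
    (Summable.of_nonneg_of_le (fun p => by positivity) hle (hprimes.mul_left 2))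
  exact lt_irrefl _ this

end OrbitCount

theorem orbit_dirichlet_abscissa_general (m N : ℕ) (hm : 0 < m) (lam : Fin m → ℕ)
    (hpos : ∀ i, 1 ≤ lam i) (hN : N = ∑ i, lam i) :
    (∀ s : ℂ, (N : ℝ) < s.re →
      Summable fun n : ℕ => (Ocount lam n : ℂ) * (n : ℂ) ^ (-s)) ∧
    (∀ s : ℂ, s.re < (N : ℝ) →
      ¬ Summable fun n : ℕ => (Ocount lam n : ℂ) * (n : ℂ) ^ (-s)) := by
  have hN0 : 0 < ∑ i, lam i :=
    (hpos ⟨0, hm⟩).trans (Finset.single_le_sum (fun i _ => Nat.zero_le (lam i)) (mem_univ _))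
  have hterm (s : ℂ) : (fun n : ℕ => (Ocount lam n : ℂ) * (n : ℂ) ^ (-s)) =
      LSeries.term (fun n => (Ocount lam n : ℂ)) s := by
    have h0 : (Ocount lam 0 : ℂ) = 0 := by rw [Ocount_zero, Rat.cast_zero]
    exact funext fun n => (LSeries.term_def₀ (f := fun n => (Ocount lam n : ℂ)) h0 s n).symm
  subst hN
  refine ⟨fun s hs => ?_, fun s hs => ?_⟩
  · rw [hterm]
    exact LSeriesSummable_Ocount lam hN0 hs
  · rw [hterm]
    exact not_LSeriesSummable_Ocount lam hN0 hs.le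

/-- **Theorem 4.1(1), abscissa of convergence**: the orbit Dirichlet series
`Σ_{n≥1} O_λ(n) n^{−s}` converges for `Re(s) > N` and diverges for `Re(s) < N`. -/
theorem orbit_dirichlet_abscissa (m N : ℕ) (hm : 0 < m) (lam : Fin m → ℕ)
    (hanti : Antitone lam) (hpos : ∀ i, 1 ≤ lam i) (hN : N = ∑ i, lam i) :
    (∀ s : ℂ, (N : ℝ) < s.re →
      Summable fun n : ℕ => (Ocount lam n : ℂ) * (n : ℂ) ^ (-s)) ∧
    (∀ s : ℂ, s.re < (N : ℝ) →
      ¬ Summable fun n : ℕ => (Ocount lam n : ℂ) * (n : ℂ) ^ (-s)) :=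
  orbit_dirichlet_abscissa_general m N hm lam hpos hN
end
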